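/- Let S : [0, ∞) → [0, ∞) be nonincreasing and let h : [0, ∞) → [0, ∞) be a nonnegative convex function satisfying ∫₀^∞ h(t) S(t) dt ≤ 1. Then for every x > 0 with ∫₀ˣ S(t) dt > 0 and ∫ₓ^∞ S(t) dt > 0, one has h(x) ≤ (∫₀ˣ S(t) dt)⁻¹ + (∫ₓ^∞ S(t) dt)⁻¹. -/

import Mathlib

open MeasureTheory Set
open scoped ENNReal

/-! A convex function cannot lie strictly below its value at `x` both somewhere left of `x` and
somewhere right of `x`; so `h ≥ h x` on all of `(0, x)` or on all of `(x, ∞)`. On that interval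
`h x · ∫ S ≤ ∫ h S ≤ 1`, and `h x` is bounded by the reciprocal of the corresponding integral. -/

theorem ConvexOn.forall_le_of_lt_or_forall_le_of_gt {𝕜 β : Type*} [Field 𝕜] [LinearOrder 𝕜]
    [IsStrictOrderedRing 𝕜] [AddCommMonoid β] [LinearOrder β] [IsOrderedCancelAddMonoid β]
    [Module 𝕜 β] [PosSMulStrictMono 𝕜 β] {s : Set 𝕜} {f : 𝕜 → β} (hf : ConvexOn 𝕜 s f) (x : 𝕜) :
    (∀ t ∈ s, t < x → f x ≤ f t) ∨ (∀ t ∈ s, x < t → f x ≤ f t) := by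
  refine or_iff_not_imp_left.2 fun hleft t ht hxt => ?_
  push Not at hleft
  obtain ⟨t₀, ht₀, ht₀x, hlt⟩ := hleft
  exact hf.le_right_of_left_le'' ht₀ ht ht₀x hxt.le hlt.le

theorem ofReal_mul_setLIntegral_le_setLIntegral_mul {α : Type*} [MeasurableSpace α]
    {μ : Measure α} {s : Set α} {c : ℝ} {f g : α → ℝ} (hs : MeasurableSet s) (hc : 0 ≤ c)
    (hcf : ∀ t ∈ s, c ≤ f t) (hg : ∀ t ∈ s, 0 ≤ g t) :
    ENNReal.ofReal c * ∫⁻ t in s, ENNReal.ofReal (g t) ∂μ ≤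
      ∫⁻ t in s, ENNReal.ofReal (f t * g t) ∂μ := by
  rw [← lintegral_const_mul' _ _ ENNReal.ofReal_ne_top]
  refine setLIntegral_mono' hs fun t ht => ?_
  rw [← ENNReal.ofReal_mul hc]
  exact ENNReal.ofReal_le_ofReal (mul_le_mul_of_nonneg_right (hcf t ht) (hg t ht))

theorem envelope_bound_for_convex_general (S h : ℝ → ℝ)
    (hS_nonneg : ∀ t, 0 ≤ t → 0 ≤ S t)
    (hh_conv : ConvexOn ℝ (Ici 0) h)
    (hh_nonneg : ∀ t, 0 ≤ t → 0 ≤ h t)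
    (hint : ∫⁻ t in Ioi (0:ℝ), ENNReal.ofReal (h t * S t) ≤ 1) :
    ∀ x : ℝ, 0 < x →
      0 < ∫⁻ t in Ioo (0:ℝ) x, ENNReal.ofReal (S t) →
      0 < ∫⁻ t in Ioi x, ENNReal.ofReal (S t) →
      ENNReal.ofReal (h x) ≤
        (∫⁻ t in Ioo (0:ℝ) x, ENNReal.ofReal (S t))⁻¹ +
        (∫⁻ t in Ioi x, ENNReal.ofReal (S t))⁻¹ := by
  intro x hx _ _
  have bound : ∀ s ⊆ Ioi (0:ℝ), MeasurableSet s → (∀ t ∈ s, h x ≤ h t) →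
      ENNReal.ofReal (h x) ≤ (∫⁻ t in s, ENNReal.ofReal (S t))⁻¹ := fun s hs0 hs hle =>
    ENNReal.le_inv_iff_mul_le.2 <|
      (ofReal_mul_setLIntegral_le_setLIntegral_mul hs (hh_nonneg x hx.le) hle
        fun t ht => hS_nonneg t (hs0 ht).le).trans ((lintegral_mono_set hs0).trans hint)
  rcases hh_conv.forall_le_of_lt_or_forall_le_of_gt x with hleft | hright
  · exact (bound (Ioo 0 x) Ioo_subset_Ioi_self measurableSet_Ioo
      fun t ht => hleft t ht.1.le ht.2).trans le_self_add
  · exact (bound (Ioi x) (Ioi_subset_Ioi hx.le) measurableSet_Ioi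
      fun t ht => hright t (hx.le.trans ht.le) ht).trans le_add_self

/-- The envelope bound: if `S : [0,∞) → [0,∞)` is nonincreasing, `h` is nonnegative and convex
on `[0,∞)`, and `∫₀^∞ h S ≤ 1`, then for every `x > 0` with `∫₀ˣ S > 0` and `∫ₓ^∞ S > 0`,
`h(x) ≤ (∫₀ˣ S)⁻¹ + (∫ₓ^∞ S)⁻¹`.  (The integrals are Lebesgue integrals of the nonnegative
integrands, so that no integrability side conditions are needed; `(∞)⁻¹ = 0`.) -/
theorem envelope_bound_for_convex (S h : ℝ → ℝ)
    (hS_nonneg : ∀ t, 0 ≤ t → 0 ≤ S t)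
    (hS_anti : AntitoneOn S (Ici 0))
    (hh_conv : ConvexOn ℝ (Ici 0) h)
    (hh_nonneg : ∀ t, 0 ≤ t → 0 ≤ h t)
    (hint : ∫⁻ t in Ioi (0:ℝ), ENNReal.ofReal (h t * S t) ≤ 1) :
    ∀ x : ℝ, 0 < x →
      0 < ∫⁻ t in Ioo (0:ℝ) x, ENNReal.ofReal (S t) →
      0 < ∫⁻ t in Ioi x, ENNReal.ofReal (S t) →
      ENNReal.ofReal (h x) ≤
        (∫⁻ t in Ioo (0:ℝ) x, ENNReal.ofReal (S t))⁻¹ +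
        (∫⁻ t in Ioi x, ENNReal.ofReal (S t))⁻¹ :=
  envelope_bound_for_convex_general S h hS_nonneg hh_conv hh_nonneg hint
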